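/- Let φ(z) = (sin(ωz), cos(ωz)) and suppose M ∈ ℝ^{2×2} satisfies φ(z − τ)ᵀ M φ(z' − τ) = φ(z)ᵀ M φ(z') for all z, z', τ ∈ ℝ, where ω ≠ 0. Then M is of the form [[α, β], [-β, α]] for some α, β ∈ ℝ. -/
import Mathlib


open Matrix

theorem stmt2 (ω : ℝ) (hω : ω ≠ 0) (M : Matrix (Fin 2) (Fin 2) ℝ)
    (h : ∀ z z' τ : ℝ,
      (![Real.sin (ω * (z - τ)), Real.cos (ω * (z - τ))]) ⬝ᵥ
        (M.mulVec ![Real.sin (ω * (z' - τ)), Real.cos (ω * (z' - τ))]) =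
      (![Real.sin (ω * z), Real.cos (ω * z)]) ⬝ᵥ
        (M.mulVec ![Real.sin (ω * z'), Real.cos (ω * z')])) :
    ∃ α β : ℝ, M = !![α, β; -β, α] := by
  have key : ω * (Real.pi / (2 * ω)) = Real.pi / 2 := by field_simp
  have h1 := h 0 0 (Real.pi / (2 * ω))
  have h2 := h 0 (Real.pi / (2 * ω)) (Real.pi / (2 * ω))
  simp only [zero_sub, sub_self, mul_zero, mul_neg, key, Real.sin_neg, Real.cos_neg,
    Real.sin_pi_div_two, Real.cos_pi_div_two, Real.sin_zero, Real.cos_zero] at h1 h2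
  simp [dotProduct, mulVec, Fin.sum_univ_succ] at h1 h2
  refine ⟨M 0 0, M 0 1, ?_⟩
  ext i j
  fin_cases i <;> fin_cases j <;> simp <;> linarith
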